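/- arXiv:2501.17794 — 5 statements merged into one kernel-verified Lean document; each statement's English description precedes it below -/
import Mathlib

section
/- Let f : Fin N → L with the linear adjacency structure. If a connected component C of the sublevel set {i | f i ≤ l} is disjoint from the strict sublevel set {i | f i < l} (i.e., a new component is born at level l), then C is a flat local minimum: C is a set of consecutive indices all with value l, and every index adjacent to C but outside C has value strictly greater than l. -/
/-- One adjacency step inside a subset `S` of the linear domain `Fin N`. -/
def AdjStep {N : ℕ} (S : Set (Fin N)) (x y : Fin N) : Prop :=
  x ∈ S ∧ y ∈ S ∧ (x.val + 1 = y.val ∨ y.val + 1 = x.val)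

/-- `a` and `b` are joined by a chain of adjacent elements staying in `S`. -/
def ConnectedIn {N : ℕ} (S : Set (Fin N)) (a b : Fin N) : Prop :=
  Relation.ReflTransGen (AdjStep S) a b

/-- `C` is a connected component of `S`. -/
def IsConnComp {N : ℕ} (S C : Set (Fin N)) : Prop :=
  ∃ a, a ∈ S ∧ C = {b | ConnectedIn S a b}

/-!
A component of `{f ≤ l}` missing `{f < l}` has `f = l` throughout. On the path `Fin N` a chain of
adjacent indices moves by one at a time, so it passes through every index between its ends;
hence components are intervals. Finally, a neighbour of the component with `f ≤ l` would be
joined to it, so every outside neighbour has `f > l`.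
-/

namespace AdjStep

variable {N : ℕ} {S : Set (Fin N)} {x y : Fin N}

theorem symm (h : AdjStep S x y) : AdjStep S y x :=
  ⟨h.2.1, h.1, h.2.2.symm⟩

end AdjStep

namespace ConnectedIn

variable {N : ℕ} {S : Set (Fin N)} {x y k : Fin N}

theorem symm (h : ConnectedIn S x y) : ConnectedIn S y x := by
  induction h with
  | refl => exact .refl
  | tail _ step ih => exact Relation.ReflTransGen.head step.symm ih

theorem trans {z : Fin N} (hxy : ConnectedIn S x y) (hyz : ConnectedIn S y z) :
    ConnectedIn S x z :=
  Relation.ReflTransGen.trans hxy hyz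

theorem mem_right (h : ConnectedIn S x y) (hx : x ∈ S) : y ∈ S := by
  induction h with
  | refl => exact hx
  | tail _ step _ => exact step.2.1

/-- Discrete intermediate value property: a chain steps by one, so it cannot jump over `k`. -/
theorem of_between (h : ConnectedIn S x y) (hk₁ : min x.val y.val ≤ k.val)
    (hk₂ : k.val ≤ max x.val y.val) : ConnectedIn S x k := by
  induction h with
  | refl => exact (show k = x from Fin.ext (by omega)) ▸ .refl
  | @tail y z hxy step ih =>
    by_cases hky : min x.val y.val ≤ k.val ∧ k.val ≤ max x.val y.val
    · exact ih hky.1 hky.2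
    · have hkz : k = z := Fin.ext (by have := step.2.2; omega)
      exact hkz ▸ hxy.tail step

end ConnectedIn

namespace IsConnComp

variable {N : ℕ} {S C : Set (Fin N)}

theorem subset (hC : IsConnComp S C) : C ⊆ S := by
  obtain ⟨a, ha, rfl⟩ := hC
  exact fun _ hb => ConnectedIn.mem_right hb ha

theorem mem_of_between (hC : IsConnComp S C) {i j k : Fin N} (hi : i ∈ C) (hj : j ∈ C)
    (hik : i.val ≤ k.val) (hkj : k.val ≤ j.val) : k ∈ C := by
  obtain ⟨a, -, rfl⟩ := hC
  have hij : ConnectedIn S i j := hi.symm.trans hj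
  exact ConnectedIn.trans hi (hij.of_between (by omega) (by omega))

theorem mem_of_adj (hC : IsConnComp S C) {i j : Fin N} (hj : j ∈ C) (hi : i ∈ S)
    (hadj : i.val + 1 = j.val ∨ j.val + 1 = i.val) : i ∈ C := by
  have hjS := hC.subset hj
  obtain ⟨a, -, rfl⟩ := hC
  exact Relation.ReflTransGen.tail hj ⟨hjS, hi, hadj.symm⟩

end IsConnComp

theorem born_component_is_flat_local_min {N : ℕ} {L : Type*} [LinearOrder L]
    (f : Fin N → L) (l : L) (C : Set (Fin N))
    (hC : IsConnComp {i | f i ≤ l} C)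
    (hdisj : C ∩ {i | f i < l} = ∅) :
    (∀ i ∈ C, f i = l) ∧
    (∀ i ∈ C, ∀ j ∈ C, ∀ k : Fin N, i.val ≤ k.val → k.val ≤ j.val → k ∈ C) ∧
    (∀ i : Fin N, ∀ j ∈ C, (i.val + 1 = j.val ∨ j.val + 1 = i.val) → i ∉ C → l < f i) := by
  have not_lt_of_mem : ∀ i ∈ C, ¬ f i < l := fun i hi hlt =>
    (Set.eq_empty_iff_forall_notMem.mp hdisj) i ⟨hi, hlt⟩
  refine ⟨fun i hi => le_antisymm (hC.subset hi) (not_lt.mp (not_lt_of_mem i hi)),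
    fun i hi j hj k => hC.mem_of_between hi hj, ?_⟩
  intro i j hj hadj hiC
  exact lt_of_not_ge fun hle => hiC (hC.mem_of_adj hj hle hadj)
end

section
/- Let f : Fin N → L with linear adjacency. Suppose {m, ..., n} with m ≥ 1 and n ≤ N-2 is a flat local maximum at level l (f(k) = l for m ≤ k ≤ n, f(m-1) < l, f(n+1) < l). Then indices m-1 and n+1 lie in distinct connected components of the strict sublevel set {i | f i < l}, but lie in the same connected component of the sublevel set {i | f i ≤ l}. -/
namespace ConnectedIn

variable {N : ℕ} {S : Set (Fin N)}

theorem val_lt_of_notMem {a b : Fin N} {k : ℕ} (hk : ∀ i : Fin N, i.val = k → i ∉ S)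
    (ha : a.val < k) (h : ConnectedIn S a b) : b.val < k := by
  induction h with
  | refl => exact ha
  | @tail y z _ step ih =>
    obtain ⟨_, hzS, hadj⟩ := step
    by_contra hz
    exact hk z (by omega) hzS

theorem of_forall_mem_Icc {a b : Fin N} (hab : a ≤ b)
    (h : ∀ i : Fin N, a ≤ i → i ≤ b → i ∈ S) : ConnectedIn S a b := by
  suffices reach : ∀ k (hk : k ≤ b.val), a.val ≤ k → ConnectedIn S a ⟨k, by omega⟩ from
    reach b.val le_rfl hab
  intro k hk hak
  induction k, hak using Nat.le_induction with
  | base => exact Relation.ReflTransGen.refl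
  | succ k hak ih =>
    have hmem : ∀ j (hj : j ≤ b.val), a.val ≤ j → (⟨j, by omega⟩ : Fin N) ∈ S :=
      fun j hj haj => h _ haj hj
    exact (ih (by omega)).tail ⟨hmem k (by omega) hak, hmem (k + 1) hk (by omega), Or.inl rfl⟩

end ConnectedIn

theorem flat_local_max_merges_components_general {N : ℕ} {L : Type*} [LinearOrder L]
    (f : Fin N → L) (l : L) (m n : ℕ)
    (hm : 1 ≤ m) (hmn : m ≤ n)
    (a b : Fin N) (ha : a.val = m - 1) (hb : b.val = n + 1)
    (hflat : ∀ i : Fin N, m ≤ i.val → i.val ≤ n → f i = l)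
    (hleft : f a < l) (hright : f b < l) :
    ¬ ConnectedIn {i | f i < l} a b ∧ ConnectedIn {i | f i ≤ l} a b := by
  constructor
  · have barrier : ∀ i : Fin N, i.val = m → i ∉ {i | f i < l} := fun i hi hlt =>
      (hflat i hi.ge (by omega) ▸ hlt).false
    intro h
    have := h.val_lt_of_notMem barrier (by omega)
    omega
  · refine ConnectedIn.of_forall_mem_Icc (Fin.le_iff_val_le_val.2 (by omega)) fun i hai hib => ?_
    rw [Fin.le_iff_val_le_val] at hai hib
    show f i ≤ l
    rcases Nat.lt_or_ge i.val m with hi | hi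
    · exact (Fin.ext (by omega) : i = a) ▸ hleft.le
    rcases Nat.lt_or_ge n i.val with hi' | hi'
    · exact (Fin.ext (by omega) : i = b) ▸ hright.le
    · exact (hflat i hi hi').le

theorem flat_local_max_merges_components {N : ℕ} {L : Type*} [LinearOrder L]
    (f : Fin N → L) (l : L) (m n : ℕ)
    (hm : 1 ≤ m) (hmn : m ≤ n) (hn : n ≤ N - 2)
    (a b : Fin N) (ha : a.val = m - 1) (hb : b.val = n + 1)
    (hflat : ∀ i : Fin N, m ≤ i.val → i.val ≤ n → f i = l)
    (hleft : f a < l) (hright : f b < l) :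
    ¬ ConnectedIn {i | f i < l} a b ∧ ConnectedIn {i | f i ≤ l} a b :=
  flat_local_max_merges_components_general f l m n hm hmn a b ha hb hflat hleft hright
end

section
/- Let f : ZMod N → L (circular domain, N ≥ 2) with adjacency i ~ i+1 (mod N). Define a local minimum (resp. maximum) to be a maximal run of consecutive indices of equal value whose two neighboring values outside the run are both strictly greater (resp. strictly smaller). Then the number of local minima of f equals the number of local maxima of f. -/
/-- A maximal flat of `f` on the circular domain `ZMod N` starting at `s` with
length `k` that is a local minimum: all `k` cyclically consecutive values from
`s` are equal and both outer neighbors are strictly greater. -/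
def MinFlatC {N : ℕ} {L : Type*} [LinearOrder L] (f : ZMod N → L) (s : ZMod N) (k : ℕ) : Prop :=
  0 < k ∧ k < N ∧ (∀ j : ℕ, j < k → f (s + (j : ZMod N)) = f s) ∧
  f s < f (s - 1) ∧ f s < f (s + (k : ZMod N))

/-- A maximal flat that is a local maximum: both outer neighbors strictly smaller. -/
def MaxFlatC {N : ℕ} {L : Type*} [LinearOrder L] (f : ZMod N → L) (s : ZMod N) (k : ℕ) : Prop :=
  0 < k ∧ k < N ∧ (∀ j : ℕ, j < k → f (s + (j : ZMod N)) = f s) ∧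
  f (s - 1) < f s ∧ f (s + (k : ZMod N)) < f s

/-!
Call a position `i` *rising* (`NextStepRises`) if, walking forward from `i`, the first strict
step of `f` goes up (such a step exists because `f` is not constant). A flat starting at `s` is
a local minimum exactly when `s - 1` is not rising but `s` is, and a local maximum exactly when
`s - 1` is rising but `s` is not. So the two counts are the numbers of times one predicate
switches on and off along the cycle `s ↦ s - 1`, and along any permutation of a finite set a
predicate switches on as often as it switches off.
-/

open Finset in
theorem Equiv.Perm.card_entering_eq_card_leaving {α : Type*} [Finite α] (σ : Equiv.Perm α)
    (p : α → Prop) :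
    Nat.card {x // p (σ x) ∧ ¬ p x} = Nat.card {x // ¬ p (σ x) ∧ p x} := by
  classical
  have := Fintype.ofFinite α
  have h_enter := card_filter_add_card_filter_not (s := ({x | p (σ x)} : Finset α)) p
  have h_leave := card_filter_add_card_filter_not (s := ({x | p x} : Finset α)) (p ∘ σ)
  have h_perm : #({x | p (σ x)} : Finset α) = #({x | p x} : Finset α) :=
    card_equiv σ (by simp)
  simp only [filter_filter, Function.comp_apply] at h_enter h_leave
  simp only [Nat.card_eq_fintype_card, Fintype.card_subtype]
  simp only [and_comm] at *
  omega

theorem exists_apply_add_ne_apply_add_one {N : ℕ} [NeZero N] {α : Type*} {f : ZMod N → α}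
    (hf : ∃ a b, f a ≠ f b) (i : ZMod N) :
    ∃ d : ℕ, f (i + d) ≠ f (i + d + 1) := by
  by_contra! h_flat
  have h_const : ∀ d : ℕ, f (i + d) = f i := by
    intro d
    induction d with
    | zero => simp
    | succ d ih => rw [Nat.cast_succ, ← add_assoc, ← h_flat d, ih]
  obtain ⟨a, b, hab⟩ := hf
  apply hab
  rw [← add_sub_cancel i a, ← add_sub_cancel i b, ← ZMod.natCast_zmod_val (a - i),
    ← ZMod.natCast_zmod_val (b - i), h_const, h_const]

section NextStepDist

variable {N : ℕ} [NeZero N] {α : Type*} [DecidableEq α] {f : ZMod N → α}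
  (hf : ∃ a b, f a ≠ f b)

noncomputable def nextStepDist (i : ZMod N) : ℕ :=
  Nat.find (exists_apply_add_ne_apply_add_one hf i)

theorem apply_add_eq_of_le_nextStepDist (i : ZMod N) {j : ℕ} (hj : j ≤ nextStepDist hf i) :
    f (i + j) = f i := by
  induction j with
  | zero => simp
  | succ j ih =>
    rw [Nat.cast_succ, ← add_assoc, ← ih (by omega)]
    exact (not_not.mp (Nat.find_min _ (show j < nextStepDist hf i by omega))).symm

theorem apply_add_nextStepDist_ne (i : ZMod N) :
    f (i + nextStepDist hf i) ≠ f (i + nextStepDist hf i + 1) :=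
  Nat.find_spec (exists_apply_add_ne_apply_add_one hf i)

theorem nextStepDist_eq_succ_of_eq {i : ZMod N} (h : f i = f (i + 1)) :
    nextStepDist hf i = nextStepDist hf (i + 1) + 1 := by
  have h_shift (n : ℕ) : i + ((n + 1 : ℕ) : ZMod N) = i + 1 + n := by push_cast; ring
  obtain ⟨d, hd⟩ := exists_apply_add_ne_apply_add_one hf (i + 1)
  unfold nextStepDist
  rw [Nat.find_comp_succ _ ⟨d, by rwa [h_shift]⟩ (by simpa using h)]
  exact congrArg (· + 1) (Nat.find_congr' (by simp only [h_shift, implies_true]))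

end NextStepDist

section NextStepRises

variable {N : ℕ} [NeZero N] {L : Type*} [LinearOrder L] {f : ZMod N → L}
  (hf : ∃ a b, f a ≠ f b)

def NextStepRises (i : ZMod N) : Prop :=
  f (i + nextStepDist hf i) < f (i + nextStepDist hf i + 1)

theorem nextStepRises_iff_of_ne {i : ZMod N} (h : f i ≠ f (i + 1)) :
    NextStepRises hf i ↔ f i < f (i + 1) := by
  have h_zero : nextStepDist hf i = 0 := Nat.find_eq_zero _ |>.mpr (by simpa using h)
  simp [NextStepRises, h_zero]

theorem nextStepRises_iff_of_eq {i : ZMod N} (h : f i = f (i + 1)) :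
    NextStepRises hf i ↔ NextStepRises hf (i + 1) := by
  rw [NextStepRises, NextStepRises, nextStepDist_eq_succ_of_eq hf h, Nat.cast_succ, ← add_assoc,
    add_right_comm i]

theorem nextStepRises_iff_of_flat {i : ZMod N} {m : ℕ} (h : ∀ j ≤ m, f (i + j) = f i) :
    NextStepRises hf i ↔ NextStepRises hf (i + m) := by
  induction m with
  | zero => simp
  | succ m ih =>
    have h_step : f (i + m) = f (i + m + 1) := by
      rw [add_assoc, ← Nat.cast_succ, h m (by omega), h (m + 1) le_rfl]
    rw [ih fun j hj => h j (by omega), nextStepRises_iff_of_eq hf h_step, Nat.cast_succ, add_assoc]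

theorem exists_minFlatC_iff (s : ZMod N) :
    (∃ k, MinFlatC f s k) ↔ ¬ NextStepRises hf (s - 1) ∧ NextStepRises hf s := by
  constructor
  · rintro ⟨k, hk_pos, -, h_flat, h_left, h_right⟩
    have h_last : s + ((k - 1 : ℕ) : ZMod N) + 1 = s + k := by
      push_cast [Nat.cast_sub hk_pos]; ring
    have h_end : f (s + ((k - 1 : ℕ) : ZMod N)) = f s := h_flat _ (by omega)
    refine ⟨?_, ?_⟩
    · rw [nextStepRises_iff_of_ne hf (by rw [sub_add_cancel]; exact h_left.ne'), sub_add_cancel,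
        not_lt]
      exact h_left.le
    · rw [nextStepRises_iff_of_flat hf (m := k - 1) fun j hj => h_flat j (by omega),
        nextStepRises_iff_of_ne hf (by rw [h_end, h_last]; exact h_right.ne), h_end, h_last]
      exact h_right
  · rintro ⟨h_left, h_right⟩
    have h_step : f (s - 1) ≠ f s := fun h =>
      h_left ((nextStepRises_iff_of_eq hf (by rwa [sub_add_cancel])).mpr (by rwa [sub_add_cancel]))
    rw [nextStepRises_iff_of_ne hf (by rwa [sub_add_cancel]), sub_add_cancel, not_lt] at h_left
    set d := nextStepDist hf s
    have h_flat : ∀ j ≤ d, f (s + j) = f s := fun j hj =>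
      apply_add_eq_of_le_nextStepDist hf s hj
    refine ⟨d + 1, d.succ_pos, ?_, fun j hj => h_flat j (by omega), h_left.lt_of_ne' h_step, ?_⟩
    · by_contra! h_long
      have h_wrap : s + ((N - 1 : ℕ) : ZMod N) = s - 1 := by
        push_cast [Nat.cast_sub NeZero.one_le, ZMod.natCast_self]; ring
      exact h_step (h_wrap ▸ h_flat (N - 1) (by omega))
    · rw [Nat.cast_succ, ← add_assoc, ← h_flat d le_rfl]
      exact h_right

theorem nextStepDist_toDual (i : ZMod N) :
    nextStepDist (f := OrderDual.toDual ∘ f) hf i = nextStepDist hf i :=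
  Nat.find_congr' Iff.rfl

theorem nextStepRises_toDual_iff (i : ZMod N) :
    NextStepRises (f := OrderDual.toDual ∘ f) hf i ↔ ¬ NextStepRises hf i := by
  simp only [NextStepRises, nextStepDist_toDual, Function.comp_apply,
    OrderDual.toDual_lt_toDual, not_lt]
  exact ⟨le_of_lt, fun h => lt_of_le_of_ne h (apply_add_nextStepDist_ne hf i).symm⟩

theorem exists_maxFlatC_iff (s : ZMod N) :
    (∃ k, MaxFlatC f s k) ↔ NextStepRises hf (s - 1) ∧ ¬ NextStepRises hf s := by
  -- `MaxFlatC f s k` is definitionally `MinFlatC (OrderDual.toDual ∘ f) s k`.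
  have h_dual := exists_minFlatC_iff (f := OrderDual.toDual ∘ f) hf s
  rwa [nextStepRises_toDual_iff, nextStepRises_toDual_iff, not_not] at h_dual

end NextStepRises

theorem circular_num_minima_eq_num_maxima {N : ℕ} (hN : 2 ≤ N) {L : Type*}
    [LinearOrder L] (f : ZMod N → L) (hnc : ∃ i j : ZMod N, f i ≠ f j) :
    Nat.card {s : ZMod N // ∃ k, MinFlatC f s k} =
      Nat.card {s : ZMod N // ∃ k, MaxFlatC f s k} := by
  have : NeZero N := ⟨by omega⟩
  calc Nat.card {s : ZMod N // ∃ k, MinFlatC f s k}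
      = Nat.card {s : ZMod N // ¬ NextStepRises hnc (s - 1) ∧ NextStepRises hnc s} :=
        Nat.card_congr (Equiv.subtypeEquivRight (exists_minFlatC_iff hnc))
    _ = Nat.card {s : ZMod N // NextStepRises hnc (s - 1) ∧ ¬ NextStepRises hnc s} :=
        (Equiv.Perm.card_entering_eq_card_leaving (Equiv.subRight 1) (NextStepRises hnc)).symm
    _ = Nat.card {s : ZMod N // ∃ k, MaxFlatC f s k} :=
        Nat.card_congr (Equiv.subtypeEquivRight (exists_maxFlatC_iff hnc)).symm
end

section
/- Let f : Fin N → L with N ≥ 1 on the linear domain. The number of connected components of the sublevel set {i | f i ≤ l} equals (number of flat local minima of f at levels ≤ l) minus (number of flat interior local maxima of f at levels ≤ l). -/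
/-- A flat local minimum of `f` starting at `s` of length `k`: a run of `k`
consecutive equal values whose existing outer neighbors are strictly higher
(boundary runs with a single existing strictly-higher neighbor also count). -/
def MinFlat {N : ℕ} {L : Type*} [LinearOrder L] (f : Fin N → L) (s : Fin N) (k : ℕ) : Prop :=
  0 < k ∧ s.val + k ≤ N ∧
  (∀ j : Fin N, s.val ≤ j.val → j.val < s.val + k → f j = f s) ∧
  (∀ j : Fin N, j.val + 1 = s.val → f s < f j) ∧
  (∀ j : Fin N, j.val = s.val + k → f s < f j)

/-- A flat interior local maximum of `f` starting at `s` of length `k`: a run of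
`k` consecutive equal values away from the boundary of the domain, with both
outer neighbors strictly lower. -/
def IntMaxFlat {N : ℕ} {L : Type*} [LinearOrder L] (f : Fin N → L) (s : Fin N) (k : ℕ) : Prop :=
  0 < k ∧ 0 < s.val ∧ s.val + k ≤ N - 1 ∧
  (∀ j : Fin N, s.val ≤ j.val → j.val < s.val + k → f j = f s) ∧
  (∀ j : Fin N, j.val + 1 = s.val → f j < f s) ∧
  (∀ j : Fin N, j.val = s.val + k → f j < f s)

/-!
Pad `f` with `⊤` at both ends and cut it into maximal constant runs. A run inside the sublevel
set `{f ≤ l}` is entered from above or from below and left upwards or downwards; flat minima are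
the runs entered from above and left upwards, flat interior maxima those entered from below and
left downwards. A run entered from above either starts a component or sits at a descent inside
the sublevel set, and sending a run to the position right after it matches the runs left
downwards with these descents. Hence, writing `X` for the runs entered from above and left
downwards, `#min + #X = #components + #descents = #components + #max + #X`.
-/

open Finset

namespace SublevelComponents

variable {N : ℕ} {L : Type*}

theorem exists_greatest_le_of_zero {P : ℕ → Prop} (h0 : P 0) (n : ℕ) :
    ∃ m ≤ n, P m ∧ ∀ k, m < k → k ≤ n → ¬ P k := by
  classical
  exact ⟨_, Nat.findGreatest_le n, Nat.findGreatest_spec (Nat.zero_le n) h0,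
    fun _ hk hkn => Nat.findGreatest_is_greatest hk hkn⟩

section Connectivity

variable {S : Set (Fin N)} {a b : Fin N}

instance : Std.Symm (AdjStep S) := ⟨fun _ _ ⟨hx, hy, h⟩ => ⟨hy, hx, h.symm⟩⟩

theorem ConnectedIn.symm (h : ConnectedIn S a b) : ConnectedIn S b a :=
  Relation.ReflTransGen.stdSymm.symm _ _ h

theorem ConnectedIn.uIcc_subset (ha : a ∈ S) (h : ConnectedIn S a b) : Set.uIcc a b ⊆ S := by
  induction h with
  | refl => simpa using ha
  | @tail c d _ hstep ih =>
    obtain ⟨-, hd, hadj⟩ := hstep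
    intro x hx
    rw [Set.mem_uIcc] at hx
    by_cases hxd : x = d
    · exact hxd ▸ hd
    · exact ih (by rw [Set.mem_uIcc]; omega)

theorem connectedIn_of_Icc_subset (hab : a ≤ b) (h : Set.Icc a b ⊆ S) : ConnectedIn S a b := by
  obtain ⟨n, hn⟩ := b
  induction n with
  | zero => exact (Fin.ext (Nat.le_zero.1 hab) : a = ⟨0, hn⟩) ▸ .refl
  | succ n ih =>
    rcases eq_or_lt_of_le hab with rfl | hlt
    · exact .refl
    have han : a.val ≤ n := Nat.lt_succ_iff.1 hlt
    have hmem : ∀ m (hm : m < N), a.val ≤ m → m ≤ n + 1 → (⟨m, hm⟩ : Fin N) ∈ S :=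
      fun m hm h1 h2 => h ⟨h1, h2⟩
    exact (ih (by omega) han fun x hx => hmem x x.isLt hx.1 (Nat.le_succ_of_le hx.2)).tail
      ⟨hmem n _ han n.le_succ, hmem (n + 1) hn (by omega) le_rfl, Or.inl rfl⟩

end Connectivity

section Runs

variable (f : Fin N → L)

/-- `f` padded by `⊤` on both sides and shifted by one: `pad f (i + 1) = f i`, so `pad f i` is
the value to the left of `i`. -/
def pad : ℕ → WithTop L
  | 0 => ⊤
  | n + 1 => if h : n < N then f ⟨n, h⟩ else ⊤

@[simp]
theorem pad_zero : pad f 0 = ⊤ := rfl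

@[simp]
theorem pad_val_succ (i : Fin N) : pad f (i.val + 1) = f i := dif_pos i.isLt

theorem exists_pad_ne (s : Fin N) : ∃ m, s.val < m ∧ pad f (m + 1) ≠ f s :=
  ⟨N, s.isLt, by simp [pad]⟩

theorem pad_iff_exists {P : WithTop L → Prop} (hP : ¬ P ⊤) (m : ℕ) :
    P (pad f m) ↔ ∃ j : Fin N, j.val + 1 = m ∧ P (f j) := by
  constructor
  · intro h
    cases m with
    | zero => exact absurd h hP
    | succ n =>
      by_cases hn : n < N
      · exact ⟨⟨n, hn⟩, rfl, by simpa [pad, hn] using h⟩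
      · simp [pad, hn, hP] at h
  · rintro ⟨j, rfl, hj⟩
    simpa using hj

variable [LinearOrder L]

theorem coe_lt_pad_iff (a : L) (m : ℕ) :
    (a : WithTop L) < pad f m ↔ ∀ j : Fin N, j.val + 1 = m → a < f j := by
  simpa [not_le] using (pad_iff_exists f (P := (· ≤ (a : WithTop L))) (by simp) m).not

theorem pad_lt_coe_iff (a : L) (m : ℕ) :
    pad f m < a ↔ ∃ j : Fin N, j.val + 1 = m ∧ f j < a := by
  simpa using pad_iff_exists f (P := (· < (a : WithTop L))) (by simp) m

/-- The first index after `s` where `f` leaves the value `f s`, or `N`. -/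
def runEnd (s : Fin N) : ℕ := Nat.find (exists_pad_ne f s)

variable {f} {s : Fin N}

theorem lt_runEnd : s.val < runEnd f s := (Nat.find_spec (exists_pad_ne f s)).1

theorem pad_runEnd_succ_ne : pad f (runEnd f s + 1) ≠ f s := (Nat.find_spec (exists_pad_ne f s)).2

theorem runEnd_le_of_pad_ne {m : ℕ} (hm : s.val < m) (h : pad f (m + 1) ≠ f s) :
    runEnd f s ≤ m :=
  Nat.find_le ⟨hm, h⟩

theorem runEnd_le : runEnd f s ≤ N := runEnd_le_of_pad_ne s.isLt (by simp [pad])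

theorem pad_succ_eq_of_lt_runEnd {m : ℕ} (h1 : s.val ≤ m) (h2 : m < runEnd f s) :
    pad f (m + 1) = f s := by
  rcases eq_or_lt_of_le h1 with rfl | h1
  · simp
  · simpa [h1] using Nat.find_min (exists_pad_ne f s) h2

theorem pad_runEnd : pad f (runEnd f s) = f s := by
  have := lt_runEnd (f := f) (s := s)
  simpa [Nat.sub_add_cancel (Nat.one_le_of_lt this)] using
    pad_succ_eq_of_lt_runEnd (f := f) (m := runEnd f s - 1) (by omega) (by omega)

theorem apply_eq_of_lt_runEnd {j : Fin N} (h1 : s ≤ j) (h2 : j.val < runEnd f s) : f j = f s := by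
  simpa using pad_succ_eq_of_lt_runEnd h1 h2

theorem runEnd_eq_of_flat {k : ℕ} (hk : 0 < k) (hkN : s.val + k ≤ N)
    (hflat : ∀ j : Fin N, s.val ≤ j.val → j.val < s.val + k → f j = f s)
    (hne : pad f (s.val + k + 1) ≠ f s) : runEnd f s = s.val + k := by
  refine le_antisymm (runEnd_le_of_pad_ne (by omega) hne) (not_lt.1 fun hlt => ?_)
  have hN : runEnd f s < N := by omega
  apply pad_runEnd_succ_ne (f := f) (s := s)
  rw [show runEnd f s + 1 = (⟨runEnd f s, hN⟩ : Fin N).val + 1 from rfl, pad_val_succ,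
    hflat _ (le_of_lt lt_runEnd) hlt]

theorem eq_of_lt_runEnd {t : Fin N} (ht : pad f t ≠ f t) (h1 : s ≤ t)
    (h2 : t.val < runEnd f s) : t = s := by
  by_contra hne
  have hst : s.val < t.val := lt_of_le_of_ne h1 (Fin.val_ne_of_ne (Ne.symm hne))
  apply ht
  rw [apply_eq_of_lt_runEnd h1 h2,
    ← pad_succ_eq_of_lt_runEnd (m := t.val - 1) (by omega) (by omega),
    Nat.sub_add_cancel (by omega)]

theorem exists_runStart (p : Fin N) :
    ∃ s : Fin N, pad f s ≠ f s ∧ s ≤ p ∧ p.val < runEnd f s := by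
  have h0 : pad f 0 ≠ pad f ((⟨0, p.pos⟩ : Fin N).val + 1) := by rw [pad_val_succ]; simp
  obtain ⟨m, hmp, hm, hmax⟩ :=
    exists_greatest_le_of_zero (P := fun m => pad f m ≠ pad f (m + 1)) h0 p
  let s : Fin N := ⟨m, by omega⟩
  refine ⟨s, by rw [← pad_val_succ f s]; exact hm, hmp, not_le.1 fun hle => ?_⟩
  exact hmax _ (lt_runEnd (s := s)) hle (by rw [pad_runEnd]; exact pad_runEnd_succ_ne.symm)

end Runs

section FlatExtrema

variable [LinearOrder L] {f : Fin N → L} {s : Fin N}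

theorem exists_minFlat_iff :
    (∃ k, MinFlat f s k) ↔
      (f s : WithTop L) < pad f s ∧ (f s : WithTop L) < pad f (runEnd f s + 1) := by
  constructor
  · rintro ⟨k, hk, hkN, hflat, hleft, hright⟩
    have hright' : (f s : WithTop L) < pad f (s.val + k + 1) :=
      (coe_lt_pad_iff f _ _).2 fun j hj => hright j (by omega)
    rw [runEnd_eq_of_flat hk hkN hflat hright'.ne']
    exact ⟨(coe_lt_pad_iff f _ _).2 hleft, hright'⟩
  · rintro ⟨hleft, hright⟩
    have := lt_runEnd (f := f) (s := s)
    have := runEnd_le (f := f) (s := s)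
    exact ⟨runEnd f s - s, by omega, by omega, fun j h1 h2 => apply_eq_of_lt_runEnd h1 (by omega),
      (coe_lt_pad_iff f _ _).1 hleft, fun j hj => (coe_lt_pad_iff f _ _).1 hright j (by omega)⟩

theorem exists_intMaxFlat_iff :
    (∃ k, IntMaxFlat f s k) ↔ pad f s < f s ∧ pad f (runEnd f s + 1) < f s := by
  constructor
  · rintro ⟨k, hk, hs0, hkN, hflat, hleft, hright⟩
    have hsk : s.val + k < N := by omega
    have hright' : pad f (s.val + k + 1) < f s :=
      (pad_lt_coe_iff f _ _).2 ⟨⟨_, hsk⟩, rfl, hright _ rfl⟩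
    rw [runEnd_eq_of_flat hk hsk.le hflat hright'.ne]
    exact ⟨(pad_lt_coe_iff f _ _).2 ⟨⟨s - 1, by omega⟩, Nat.sub_add_cancel hs0,
      hleft _ (Nat.sub_add_cancel hs0)⟩, hright'⟩
  · rintro ⟨hleft, hright⟩
    obtain ⟨i, hi, hil⟩ := (pad_lt_coe_iff f _ _).1 hleft
    obtain ⟨j, hj, hjl⟩ := (pad_lt_coe_iff f _ _).1 hright
    have := lt_runEnd (f := f) (s := s)
    exact ⟨runEnd f s - s, by omega, by omega, by omega,
      fun j h1 h2 => apply_eq_of_lt_runEnd h1 (by omega),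
      fun i' hi' => (Fin.ext (by omega) : i' = i) ▸ hil,
      fun j' hj' => (Fin.ext (by omega) : j' = j) ▸ hjl⟩

end FlatExtrema

section Counting

variable (f : Fin N → L) [LinearOrder L] (l : L)

def minStarts : Finset (Fin N) :=
  {s | f s ≤ l ∧ (f s : WithTop L) < pad f s ∧ (f s : WithTop L) < pad f (runEnd f s + 1)}

def maxStarts : Finset (Fin N) :=
  {s | f s ≤ l ∧ pad f s < f s ∧ pad f (runEnd f s + 1) < f s}

def componentStarts : Finset (Fin N) := {s | f s ≤ l ∧ (l : WithTop L) < pad f s}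

def descents : Finset (Fin N) := {s | pad f s ≤ l ∧ (f s : WithTop L) < pad f s}

theorem natCard_minFlat :
    Nat.card {s : Fin N // ∃ k, MinFlat f s k ∧ f s ≤ l} = #(minStarts f l) := by
  rw [← Nat.card_eq_finsetCard]
  refine Nat.card_congr (Equiv.subtypeEquivRight fun s => ?_)
  simp only [minStarts, mem_filter, mem_univ, true_and, exists_and_right, exists_minFlat_iff]
  tauto

theorem natCard_intMaxFlat :
    Nat.card {s : Fin N // ∃ k, IntMaxFlat f s k ∧ f s ≤ l} = #(maxStarts f l) := by
  rw [← Nat.card_eq_finsetCard]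
  refine Nat.card_congr (Equiv.subtypeEquivRight fun s => ?_)
  simp only [maxStarts, mem_filter, mem_univ, true_and, exists_and_right, exists_intMaxFlat_iff]
  tauto

theorem card_filter_lt_pad :
    #{s | f s ≤ l ∧ (f s : WithTop L) < pad f s} =
      #(componentStarts f l) + #(descents f l) := by
  rw [componentStarts, descents, ← card_union_of_disjoint
    (disjoint_filter.2 fun s _ h1 h2 => (not_le.2 h1.2) h2.1), ← filter_or]
  refine congrArg card (filter_congr fun s _ => ?_)
  constructor
  · rintro ⟨hs, hlt⟩
    exact (lt_or_ge (l : WithTop L) (pad f s)).imp (⟨hs, ·⟩) (⟨·, hlt⟩)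
  · rintro (⟨hs, hlt⟩ | ⟨hle, hlt⟩)
    · exact ⟨hs, lt_of_le_of_lt (WithTop.coe_le_coe.2 hs) hlt⟩
    · exact ⟨WithTop.coe_le_coe.1 (hlt.trans_le hle).le, hlt⟩

theorem card_minStarts_add :
    #(minStarts f l) +
        #{s | f s ≤ l ∧ (f s : WithTop L) < pad f s ∧ pad f (runEnd f s + 1) < f s} =
      #{s | f s ≤ l ∧ (f s : WithTop L) < pad f s} := by
  rw [minStarts, ← card_union_of_disjoint
    (disjoint_filter.2 fun s _ h1 h2 => (lt_asymm h1.2.2) h2.2.2), ← filter_or]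
  refine congrArg card (filter_congr fun s _ => ?_)
  have := (pad_runEnd_succ_ne (f := f) (s := s)).lt_or_gt
  tauto

theorem card_maxStarts_add :
    #(maxStarts f l) +
        #{s | f s ≤ l ∧ (f s : WithTop L) < pad f s ∧ pad f (runEnd f s + 1) < f s} =
      #{s | f s ≤ l ∧ pad f s ≠ f s ∧ pad f (runEnd f s + 1) < f s} := by
  rw [maxStarts, ← card_union_of_disjoint
    (disjoint_filter.2 fun s _ h1 h2 => (lt_asymm h1.2.1) h2.2.1), ← filter_or]
  refine congrArg card (filter_congr fun s _ => ?_)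
  have := lt_trichotomy (pad f s) (f s)
  have := fun h : (f s : WithTop L) < pad f s => h.ne'
  have := fun h : pad f s < f s => h.ne
  tauto

theorem card_descents :
    #{s | f s ≤ l ∧ pad f s ≠ f s ∧ pad f (runEnd f s + 1) < f s} = #(descents f l) := by
  have runEnd_lt {s : Fin N} (hdown : pad f (runEnd f s + 1) < f s) : runEnd f s < N := by
    obtain ⟨j, hj, -⟩ := (pad_lt_coe_iff f _ _).1 hdown
    omega
  refine card_bij (fun s hs => ⟨runEnd f s, runEnd_lt (mem_filter.1 hs).2.2.2⟩) ?_ ?_ ?_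
  · intro s hs
    obtain ⟨hsl, -, hdown⟩ := (mem_filter.1 hs).2
    refine mem_filter.2 ⟨mem_univ _, ?_, ?_⟩ <;> rw [pad_runEnd]
    · exact WithTop.coe_le_coe.2 hsl
    · rwa [← pad_val_succ]
  · intro s hs t ht heq
    have heq : runEnd f s = runEnd f t := congrArg Fin.val heq
    rcases le_total s t with h | h
    · exact (eq_of_lt_runEnd (mem_filter.1 ht).2.2.1 h (heq ▸ lt_runEnd)).symm
    · exact eq_of_lt_runEnd (mem_filter.1 hs).2.2.1 h (heq ▸ lt_runEnd)
  · intro e he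
    obtain ⟨hel, hedown⟩ := (mem_filter.1 he).2
    obtain ⟨p, hp, hpl⟩ := (pad_iff_exists f (P := (· ≤ (l : WithTop L))) (by simp) e).1 hel
    obtain ⟨s, hs, hsp, hpe⟩ := exists_runStart (f := f) p
    have hes : pad f e = f s := hp ▸ pad_succ_eq_of_lt_runEnd hsp hpe
    have hend : runEnd f s = e := le_antisymm
      (runEnd_le_of_pad_ne (by rw [Fin.le_def] at hsp; omega)
        (by rw [pad_val_succ]; exact (hedown.trans_eq hes).ne)) (by omega)
    refine ⟨s, mem_filter.2 ⟨mem_univ _, ?_, hs, ?_⟩, Fin.ext hend⟩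
    · rwa [apply_eq_of_lt_runEnd hsp hpe, WithTop.coe_le_coe] at hpl
    · rwa [hend, pad_val_succ, ← hes]

theorem card_minStarts_eq : #(minStarts f l) = #(componentStarts f l) + #(maxStarts f l) := by
  have := card_minStarts_add f l
  have := card_maxStarts_add f l
  have := card_filter_lt_pad f l
  have := card_descents f l
  omega

end Counting

section Components

variable (f : Fin N → L) [LinearOrder L] (l : L)

theorem exists_componentStart_le {a : Fin N} (ha : f a ≤ l) :
    ∃ c ∈ componentStarts f l, c ≤ a ∧ Set.Icc c a ⊆ {i | f i ≤ l} := by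
  obtain ⟨m, hma, hm, hmax⟩ :=
    exists_greatest_le_of_zero (P := fun m => ¬ pad f m ≤ l) (by simp) a
  let c : Fin N := ⟨m, by omega⟩
  have hIcc : Set.Icc c a ⊆ {i | f i ≤ l} := by
    rintro i ⟨hci, hia⟩
    rcases eq_or_lt_of_le hia with rfl | hia
    · exact ha
    · simpa using hmax (i.val + 1) (Nat.lt_succ_of_le hci) hia
  exact ⟨c, mem_filter.2 ⟨mem_univ _, hIcc ⟨le_rfl, hma⟩, not_le.1 hm⟩, hma, hIcc⟩

theorem not_connectedIn_of_lt {c c' : Fin N} (hc : c ∈ componentStarts f l)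
    (hc' : c' ∈ componentStarts f l) (hlt : c < c') : ¬ ConnectedIn {i | f i ≤ l} c c' := by
  intro h
  rw [Fin.lt_def] at hlt
  let p : Fin N := ⟨c' - 1, by omega⟩
  have hp : f p ≤ l := ConnectedIn.uIcc_subset (mem_filter.1 hc).2.1 h
    (Set.mem_uIcc.2 (Or.inl ⟨Nat.le_sub_one_of_lt hlt, Nat.sub_le _ _⟩))
  have := (mem_filter.1 hc').2.2
  rw [show c'.val = p.val + 1 from (Nat.sub_add_cancel (Nat.one_le_of_lt hlt)).symm,
    pad_val_succ] at this
  exact not_le.2 (WithTop.coe_lt_coe.1 this) hp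

theorem components_eq_image :
    {C | IsConnComp {i | f i ≤ l} C} =
      (fun a => {b | ConnectedIn {i | f i ≤ l} a b}) '' componentStarts f l := by
  ext C
  constructor
  · rintro ⟨a, ha, rfl⟩
    obtain ⟨c, hc, hca, hIcc⟩ := exists_componentStart_le f l ha
    have hconn := connectedIn_of_Icc_subset hca hIcc
    exact ⟨c, hc, Set.ext fun b => ⟨(ConnectedIn.symm hconn).trans, hconn.trans⟩⟩
  · rintro ⟨c, hc, rfl⟩
    exact ⟨c, (mem_filter.1 hc).2.1, rfl⟩

theorem injOn_componentStarts :
    Set.InjOn (fun a => {b | ConnectedIn {i | f i ≤ l} a b}) (componentStarts f l) := by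
  intro c hc c' hc' heq
  by_contra hne
  rcases lt_or_gt_of_ne hne with hlt | hlt
  · exact not_connectedIn_of_lt f l hc hc' hlt ((Set.ext_iff.1 heq c').2 .refl)
  · exact not_connectedIn_of_lt f l hc' hc hlt ((Set.ext_iff.1 heq c).1 .refl)

theorem ncard_components :
    {C | IsConnComp {i | f i ≤ l} C}.ncard = #(componentStarts f l) := by
  rw [components_eq_image, (injOn_componentStarts f l).ncard_image, Set.ncard_coe_finset]

end Components

end SublevelComponents

theorem component_count_eq_minima_sub_interior_maxima_general {N : ℕ} {L : Type*}
    [LinearOrder L] (f : Fin N → L) (l : L) :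
    {C : Set (Fin N) | IsConnComp {i | f i ≤ l} C}.ncard =
      Nat.card {s : Fin N // ∃ k, MinFlat f s k ∧ f s ≤ l} -
      Nat.card {s : Fin N // ∃ k, IntMaxFlat f s k ∧ f s ≤ l} := by
  rw [SublevelComponents.ncard_components, SublevelComponents.natCard_minFlat,
    SublevelComponents.natCard_intMaxFlat, SublevelComponents.card_minStarts_eq, Nat.add_sub_cancel]

theorem component_count_eq_minima_sub_interior_maxima {N : ℕ} {L : Type*}
    [LinearOrder L] (hN : 1 ≤ N) (f : Fin N → L) (l : L) :
    {C : Set (Fin N) | IsConnComp {i | f i ≤ l} C}.ncard =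
      Nat.card {s : Fin N // ∃ k, MinFlat f s k ∧ f s ≤ l} -
      Nat.card {s : Fin N // ∃ k, IntMaxFlat f s k ∧ f s ≤ l} :=
  component_count_eq_minima_sub_interior_maxima_general f l
end

section
/- Let f : Fin N → L on the linear domain with N ≥ 1. The number of local minima of f minus the number of interior local maxima of f equals 1. -/
/-!
Read the start `s` of a flat as follows: it starts a minimum iff its left neighbour (if any) is
higher and the first later value different from `f s` (if any) is not lower; it starts an interior
maximum iff its left neighbour exists and is lower and that first different later value exists and
is lower. Now induct on `N`, appending a value `b` after `a = f (N - 1)`. Only the final run of the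
shorter sequence can change its status. If `a ≤ b` nothing changes. If `b < a`, a new minimum
appears at the last index, and the final run either stops being a minimum (it started at `0` or
came down from a higher value) or becomes an interior maximum (it came up from a lower value),
exactly one of the two.
-/

open Finset

theorem Fin.card_filter_univ_castSucc {n : ℕ} (p : Fin (n + 1) → Prop) [DecidablePred p] :
    #{i | p i} = #{i : Fin n | p i.castSucc} + if p (Fin.last n) then 1 else 0 := by
  simp only [card_filter, Fin.sum_univ_castSucc]

theorem card_filter_or_of_disjoint {ι : Type*} [DecidableEq ι] (s : Finset ι) {p q : ι → Prop}
    [DecidablePred p] [DecidablePred q] (h : ∀ i, p i → ¬q i) :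
    #{i ∈ s | p i ∨ q i} = #{i ∈ s | p i} + #{i ∈ s | q i} := by
  rw [filter_or, card_union_of_disjoint (disjoint_filter.2 fun i _ => h i)]

section Runs

variable {α : Type*} {n : ℕ}

def PredRel (r : α → α → Prop) (g : Fin n → α) (s : Fin n) : Prop :=
  ∀ j : Fin n, j.val + 1 = s.val → r (g j) (g s)

def TailConst (g : Fin n → α) (s : Fin n) : Prop :=
  ∀ i, s ≤ i → g i = g s

theorem predRel_castSucc_iff (r : α → α → Prop) (f : Fin (n + 1) → α) (s : Fin n) :
    PredRel r f s.castSucc ↔ PredRel r (Fin.init f) s := by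
  simp [PredRel, Fin.forall_fin_succ', Fin.init, show n + 1 ≠ s.val by omega]

theorem exists_maximal_run (g : Fin n → α) (s : Fin n) :
    ∃ k, 0 < k ∧ s.val + k ≤ n ∧
      (∀ j : Fin n, s.val ≤ j.val → j.val < s.val + k → g j = g s) ∧
      ∀ j : Fin n, j.val = s.val + k → g j ≠ g s := by
  classical
  let P k := 0 < k ∧ (s.val + k = n ∨ ∃ j : Fin n, j.val = s.val + k ∧ g j ≠ g s)
  have hP : ∃ k, P k := ⟨n - s.val, by omega, Or.inl (by omega)⟩
  obtain ⟨hk, hend⟩ := Nat.find_spec hP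
  refine ⟨Nat.find hP, hk, ?_, fun j hsj hjk => ?_, fun j hj heq => ?_⟩
  · rcases hend with h | ⟨j, hj, -⟩ <;> omega
  · by_contra hne
    have hjs : s.val < j.val := lt_of_le_of_ne hsj fun h => hne (congrArg g (Fin.ext h.symm))
    exact Nat.find_min hP (m := j.val - s.val) (by omega)
      ⟨by omega, Or.inr ⟨j, by omega, hne⟩⟩
  · rcases hend with h | ⟨j', hj', hne⟩
    · omega
    · obtain rfl : j = j' := Fin.ext (by omega)
      exact hne heq

theorem predRel_gt_or_lt_iff_predRel_ne [LinearOrder α] (g : Fin n → α) (s : Fin n) :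
    PredRel (· > ·) g s ∨ 0 < s.val ∧ PredRel (· < ·) g s ↔ PredRel (· ≠ ·) g s := by
  constructor
  · rintro (h | ⟨-, h⟩) j hj
    · exact (h j hj).ne'
    · exact (h j hj).ne
  · intro h
    rcases Nat.eq_zero_or_pos s.val with hs | hs
    · exact Or.inl fun j hj => by omega
    · have hpred : ∀ j : Fin n, j.val + 1 = s.val → j = ⟨s.val - 1, by omega⟩ :=
        fun j hj => Fin.ext (show j.val = s.val - 1 by omega)
      have hne : g ⟨s.val - 1, by omega⟩ ≠ g s := h _ (show s.val - 1 + 1 = s.val by omega)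
      rcases hne.lt_or_gt with hlt | hgt
      · exact Or.inr ⟨hs, fun j hj => hpred j hj ▸ hlt⟩
      · exact Or.inl fun j hj => hpred j hj ▸ hgt

open scoped Classical in
theorem card_filter_tailConst_and_predRel_ne (g : Fin (n + 1) → α) :
    #{s | TailConst g s ∧ PredRel (· ≠ ·) g s} = 1 := by
  obtain ⟨s₀, hs₀, hmin⟩ := ({s | TailConst g s} : Finset (Fin (n + 1))).exists_min_image id
    ⟨Fin.last n, by
      simp only [mem_filter, mem_univ, true_and]
      exact fun i hi => congrArg g (le_antisymm (Fin.le_last i) hi)⟩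
  simp only [mem_filter, mem_univ, true_and, id] at hs₀ hmin
  rw [card_eq_one]
  refine ⟨s₀, eq_singleton_iff_unique_mem.2 ⟨?_, fun s hs => ?_⟩⟩
  · simp only [mem_filter, mem_univ, true_and]
    refine ⟨hs₀, fun j hj heq => ?_⟩
    have hj : TailConst g j := fun i hi => by
      by_cases h : s₀ ≤ i
      · exact (hs₀ i h).trans heq.symm
      · exact congrArg g (Fin.ext (by rw [Fin.le_def] at h hi; omega))
    have := hmin j hj
    rw [Fin.le_def] at this
    omega
  · simp only [mem_filter, mem_univ, true_and] at hs
    obtain ⟨hT, hR⟩ := hs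
    refine le_antisymm ?_ (hmin s hT)
    by_contra hlt
    rw [not_le, Fin.lt_def] at hlt
    exact hR ⟨s.val - 1, by omega⟩ (show s.val - 1 + 1 = s.val by omega)
      ((hs₀ _ (Fin.le_def.2 (show s₀.val ≤ s.val - 1 by omega))).trans
        (hs₀ s (Fin.le_def.2 hlt.le)).symm)

end Runs

section Flats

variable {α : Type*} [LinearOrder α] {n : ℕ}

def DropsAfter (g : Fin n → α) (s : Fin n) : Prop :=
  ∃ j, s < j ∧ g j < g s ∧ ∀ i, s ≤ i → i < j → g i = g s

def DropsAtLast (f : Fin (n + 1) → α) (s : Fin n) : Prop :=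
  TailConst (Fin.init f) s ∧ f (Fin.last n) < f s.castSucc

theorem exists_minFlat_iff (g : Fin n → α) (s : Fin n) :
    (∃ k, MinFlat g s k) ↔ PredRel (· > ·) g s ∧ ¬DropsAfter g s := by
  constructor
  · rintro ⟨k, -, -, hflat, hpred, hnext⟩
    refine ⟨hpred, fun ⟨j, hsj, hlt, hconst⟩ => ?_⟩
    rw [Fin.lt_def] at hsj
    have hkj : s.val + k ≤ j.val := by
      by_contra h
      exact hlt.ne (hflat j hsj.le (by omega))
    let m : Fin n := ⟨s.val + k, by omega⟩
    have hm : g s < g m := hnext m rfl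
    rcases (Fin.le_def.2 hkj : m ≤ j).lt_or_eq with hmj | hmj
    · exact hm.ne' (hconst m (Fin.le_def.2 (by simp [m])) hmj)
    · exact lt_asymm hm (hmj ▸ hlt)
  · rintro ⟨hpred, hnd⟩
    obtain ⟨k, hk, hkn, hflat, hne⟩ := exists_maximal_run g s
    refine ⟨k, hk, hkn, hflat, hpred, fun j hj =>
      lt_of_le_of_ne (not_lt.1 fun hlt => hnd ?_) (hne j hj).symm⟩
    exact ⟨j, Fin.lt_def.2 (by omega), hlt,
      fun i hsi hij => hflat i hsi (by rw [Fin.lt_def] at hij; omega)⟩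

theorem exists_intMaxFlat_iff (g : Fin n → α) (s : Fin n) :
    (∃ k, IntMaxFlat g s k) ↔ 0 < s.val ∧ PredRel (· < ·) g s ∧ DropsAfter g s := by
  constructor
  · rintro ⟨k, hk, hs, hkn, hflat, hpred, hnext⟩
    exact ⟨hs, hpred, ⟨s.val + k, by omega⟩, Fin.lt_def.2 (show s.val < s.val + k by omega),
      hnext _ rfl, fun i hsi hik => hflat i hsi hik⟩
  · rintro ⟨hs, hpred, j, hsj, hlt, hconst⟩
    rw [Fin.lt_def] at hsj
    refine ⟨j.val - s.val, by omega, hs, by omega,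
      fun i hsi hij => hconst i hsi (Fin.lt_def.2 (by omega)), hpred, fun i hi => ?_⟩
    obtain rfl : i = j := Fin.ext (by omega)
    exact hlt

theorem not_exists_intMaxFlat_last (f : Fin (n + 1) → α) :
    ¬∃ k, IntMaxFlat f (Fin.last n) k := by
  rintro ⟨k, hk, -, hkn, -⟩
  rw [Fin.val_last] at hkn
  omega

theorem exists_minFlat_last_iff (f : Fin (n + 2) → α) :
    (∃ k, MinFlat f (Fin.last (n + 1)) k) ↔ f (Fin.last (n + 1)) < f (Fin.last n).castSucc := by
  rw [exists_minFlat_iff]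
  refine ⟨fun ⟨hpred, _⟩ => hpred _ (by simp), fun h => ⟨fun j hj => ?_, ?_⟩⟩
  · obtain rfl : j = (Fin.last n).castSucc := Fin.ext (by
      rw [Fin.val_last] at hj
      rw [Fin.val_castSucc, Fin.val_last]
      omega)
    exact h
  · exact fun ⟨j, hj, _⟩ => (Fin.le_last j).not_gt hj

theorem dropsAfter_castSucc_iff (f : Fin (n + 1) → α) (s : Fin n) :
    DropsAfter f s.castSucc ↔ DropsAfter (Fin.init f) s ∨ DropsAtLast f s := by
  simp [DropsAfter, DropsAtLast, TailConst, Fin.exists_fin_succ', Fin.forall_fin_succ', Fin.init,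
    fun i : Fin n => (Fin.le_last i.castSucc).not_gt, and_comm]

theorem DropsAtLast.not_dropsAfter_init {f : Fin (n + 1) → α} {s : Fin n} (h : DropsAtLast f s) :
    ¬DropsAfter (Fin.init f) s := fun ⟨j, hsj, hlt, _⟩ => hlt.ne (h.1 j hsj.le)

end Flats

section Counting

open scoped Classical

variable {α : Type*} [LinearOrder α] {n : ℕ}

theorem card_minFlat_init (f : Fin (n + 1) → α) :
    #{s | ∃ k, MinFlat (Fin.init f) s k} =
      #{s : Fin n | ∃ k, MinFlat f s.castSucc k} +
        #{s | PredRel (· > ·) (Fin.init f) s ∧ DropsAtLast f s} := by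
  rw [← card_filter_or_of_disjoint]
  · refine congrArg card (filter_congr fun s _ => ?_)
    have := DropsAtLast.not_dropsAfter_init (s := s) (f := f)
    rw [exists_minFlat_iff, exists_minFlat_iff, predRel_castSucc_iff, dropsAfter_castSucc_iff]
    tauto
  · intro s
    rw [exists_minFlat_iff, predRel_castSucc_iff, dropsAfter_castSucc_iff]
    tauto

theorem card_intMaxFlat_castSucc (f : Fin (n + 1) → α) :
    #{s : Fin n | ∃ k, IntMaxFlat f s.castSucc k} =
      #{s | ∃ k, IntMaxFlat (Fin.init f) s k} +
        #{s | 0 < s.val ∧ PredRel (· < ·) (Fin.init f) s ∧ DropsAtLast f s} := by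
  rw [← card_filter_or_of_disjoint]
  · refine congrArg card (filter_congr fun s _ => ?_)
    rw [exists_intMaxFlat_iff, exists_intMaxFlat_iff, predRel_castSucc_iff, dropsAfter_castSucc_iff]
    simp only [Fin.val_castSucc]
    tauto
  · intro s
    have := DropsAtLast.not_dropsAfter_init (s := s) (f := f)
    rw [exists_intMaxFlat_iff]
    tauto

-- Only the start of the final run of `Fin.init f` can satisfy either condition.
theorem card_predRel_and_dropsAtLast (f : Fin (n + 2) → α) :
    #{s | PredRel (· > ·) (Fin.init f) s ∧ DropsAtLast f s} +
        #{s | 0 < s.val ∧ PredRel (· < ·) (Fin.init f) s ∧ DropsAtLast f s} =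
      if f (Fin.last (n + 1)) < f (Fin.last n).castSucc then 1 else 0 := by
  rw [← card_filter_or_of_disjoint]
  · split_ifs with h
    · refine (congrArg card (filter_congr fun s _ => ?_)).trans
        (card_filter_tailConst_and_predRel_ne (Fin.init f))
      have hdrop : DropsAtLast f s ↔ TailConst (Fin.init f) s := by
        refine ⟨And.left, fun hT => ⟨hT, ?_⟩⟩
        rwa [show f s.castSucc = f (Fin.last n).castSucc from (hT _ (Fin.le_last _)).symm]
      rw [hdrop, ← predRel_gt_or_lt_iff_predRel_ne]
      tauto
    · refine card_eq_zero.2 (filter_eq_empty_iff.2 fun s _ hs => h ?_)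
      obtain ⟨hT, hlt⟩ : DropsAtLast f s := by
        rcases hs with ⟨-, h⟩ | ⟨-, -, h⟩ <;> exact h
      rwa [show f s.castSucc = f (Fin.last n).castSucc from (hT _ (Fin.le_last _)).symm] at hlt
  · intro s ⟨hgt, _⟩ ⟨hs, hlt, _⟩
    have hj : s.val - 1 + 1 = s.val := by omega
    exact lt_asymm (hgt ⟨s.val - 1, by omega⟩ hj) (hlt _ hj)

theorem card_minFlat_eq_card_intMaxFlat_add_one :
    ∀ {n : ℕ} (f : Fin (n + 1) → α),
      #{s | ∃ k, MinFlat f s k} = #{s | ∃ k, IntMaxFlat f s k} + 1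
  | 0, f => by
    have hmin : ∃ k, MinFlat f (Fin.last 0) k :=
      (exists_minFlat_iff f _).2
        ⟨fun j hj => by simp at hj, fun ⟨j, hj, _⟩ => (Fin.le_last j).not_gt hj⟩
    rw [Fin.card_filter_univ_castSucc (fun s => ∃ k, MinFlat f s k),
      Fin.card_filter_univ_castSucc (fun s => ∃ k, IntMaxFlat f s k), if_pos hmin,
      if_neg (not_exists_intMaxFlat_last f)]
    simp
  | n + 1, f => by
    have ih := card_minFlat_eq_card_intMaxFlat_add_one (Fin.init f)
    have hmin := card_minFlat_init f
    have hmax := card_intMaxFlat_castSucc f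
    have hnew := card_predRel_and_dropsAtLast f
    rw [Fin.card_filter_univ_castSucc (fun s => ∃ k, MinFlat f s k),
      Fin.card_filter_univ_castSucc (fun s => ∃ k, IntMaxFlat f s k), exists_minFlat_last_iff,
      if_neg (not_exists_intMaxFlat_last f)]
    split_ifs at hnew ⊢ <;> omega

end Counting

theorem num_minima_eq_num_interior_maxima_add_one {N : ℕ} {L : Type*}
    [LinearOrder L] (hN : 1 ≤ N) (f : Fin N → L) :
    Nat.card {s : Fin N // ∃ k, MinFlat f s k} =
      Nat.card {s : Fin N // ∃ k, IntMaxFlat f s k} + 1 := by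
  classical
  obtain ⟨n, rfl⟩ : ∃ n, N = n + 1 := ⟨N - 1, by omega⟩
  simp only [Nat.card_eq_fintype_card, Fintype.card_subtype]
  exact card_minFlat_eq_card_intMaxFlat_add_one f
end
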